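/- arXiv:2004.08734 — 5 statements merged into one kernel-verified Lean document; each statement's English description precedes it below -/
import Mathlib

section
/- Fix integers r ≥ 2 and a ≥ 2. Suppose G is an r-uniform hypergraph on a finite vertex set Y that has property (q,p), and Z ⊆ Y is a (w,v)-hole of G with w < q. Then the induced subhypergraph of G on Y ∖ Z (the edges of G contained in Y ∖ Z) has property (q−w, p−v). -/
open Finset

/-- `Y` is a clique of the `r`-uniform hypergraph `H`: every `r`-subset of `Y` is an edge. -/
def IsClique (r : ℕ) {α : Type*} (H : Finset (Finset α)) (Y : Finset α) : Prop :=
  ∀ e : Finset α, e ⊆ Y → e.card = r → e ∈ H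

/-- `H` (a hypergraph on vertex set `X`) has property `(q, p)`: every `q`-subset of `X`
contains a `p`-subset which is a clique of `H`. -/
def HasProp (r q p : ℕ) {α : Type*} (X : Finset α) (H : Finset (Finset α)) : Prop :=
  ∀ Z ⊆ X, Z.card = q → ∃ Y ⊆ Z, Y.card = p ∧ IsClique r H Y

/-! A `q`-set `W` avoiding `Z` is completed to the `q`-set `W ∪ Z`, which contains a
`p`-clique `C`. The part `C ∩ Z` is a clique inside `Z`, so it has at most `v` vertices, and the
remaining `p - v` or more vertices of `C` lie in `W`. -/

namespace IsClique

variable {α : Type*} {r : ℕ} {H : Finset (Finset α)} {X Y : Finset α}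

theorem mono (hY : IsClique r H Y) (hXY : X ⊆ Y) : IsClique r H X :=
  fun e he hcard => hY e (he.trans hXY) hcard

theorem filter_subset [DecidableEq α] {S : Finset α} (hX : IsClique r H X) (hXS : X ⊆ S) :
    IsClique r (H.filter (· ⊆ S)) X :=
  fun e he hcard => mem_filter.2 ⟨hX e he hcard, he.trans hXS⟩

end IsClique

theorem HasProp.sdiff {α : Type*} [DecidableEq α] {r q p v : ℕ} {Y Z : Finset α}
    {G : Finset (Finset α)} (hprop : HasProp r q p Y G) (hZY : Z ⊆ Y) (hZq : #Z ≤ q)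
    (hmax : ∀ C ⊆ Z, IsClique r G C → #C ≤ v) :
    HasProp r (q - #Z) (p - v) (Y \ Z) (G.filter (· ⊆ Y \ Z)) := by
  intro W hW hWcard
  have hWZ : Disjoint W Z := disjoint_of_subset_left hW sdiff_disjoint
  obtain ⟨C, hCWZ, hCcard, hC⟩ := hprop (W ∪ Z) (union_subset (hW.trans sdiff_subset) hZY)
    (by rw [card_union_of_disjoint hWZ]; omega)
  have hCZ : #(C ∩ Z) ≤ v := hmax _ inter_subset_right (hC.mono inter_subset_left)
  have hCW : C \ Z ⊆ W := sdiff_le_iff.2 (hCWZ.trans (union_comm W Z).le)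
  have hpv : p - v ≤ #(C \ Z) := by
    have := card_sdiff_add_card_inter C Z
    omega
  obtain ⟨B, hBC, hBcard⟩ := exists_subset_card_eq hpv
  exact ⟨B, hBC.trans hCW, hBcard,
    (hC.mono (hBC.trans sdiff_subset)).filter_subset ((hBC.trans hCW).trans hW)⟩

theorem statement4_general {α : Type*} [DecidableEq α] (r q p w v : ℕ)
    (Y : Finset α) (G : Finset (Finset α))
    (hprop : HasProp r q p Y G)
    (Z : Finset α) (hZY : Z ⊆ Y) (hZcard : Z.card = w)
    (hcliqueMax : ∀ C ⊆ Z, IsClique r G C → C.card ≤ v)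
    (hwq : w < q) :
    HasProp r (q - w) (p - v) (Y \ Z) (G.filter (fun e => e ⊆ Y \ Z)) := by
  subst hZcard
  exact hprop.sdiff hZY hwq.le hcliqueMax

/-- If an `r`-uniform hypergraph `G` on vertex set `Y` has property `(q, p)` and
`Z ⊆ Y` is a `(w, v)`-hole of `G` (i.e. `|Z| = w`, the clique number of the subhypergraph
induced on `Z` equals `v`, and `w > a * v`) with `w < q`, then the subhypergraph induced
on `Y \ Z` has property `(q - w, p - v)`. -/
theorem statement4 {α : Type*} [DecidableEq α] (r a q p w v : ℕ) (hr : 2 ≤ r) (ha : 2 ≤ a)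
    (Y : Finset α) (G : Finset (Finset α))
    (hG : ∀ e ∈ G, e ⊆ Y ∧ e.card = r)
    (hprop : HasProp r q p Y G)
    (Z : Finset α) (hZY : Z ⊆ Y) (hZcard : Z.card = w)
    (hcliqueEx : ∃ C ⊆ Z, C.card = v ∧ IsClique r G C)
    (hcliqueMax : ∀ C ⊆ Z, IsClique r G C → C.card ≤ v)
    (hhole : a * v < w) (hwq : w < q) :
    HasProp r (q - w) (p - v) (Y \ Z) (G.filter (fun e => e ⊆ Y \ Z)) :=
  statement4_general r q p w v Y G hprop Z hZY hZcard hcliqueMax hwq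
end

section
/- Fix integers r ≥ 2, a ≥ 2 and ℓ ≥ 1. Suppose F is an r-uniform hypergraph on a finite vertex set X with |X| ≥ aℓ such that for every integer q with 1 ≤ q ≤ aℓ, F has property (q, ⌈q/a⌉). Then for every subset Y ⊆ X with |Y| = aℓ, the number of edges of F contained in Y is at least a·C(ℓ, r). -/
open Finset

/-!
Remove vertices from `Y` one at a time. When `|Y| = q + 1`, property `(q + 1, ⌈(q + 1)/a⌉)`
gives a clique `K ⊆ Y` with `|K| = ⌊q/a⌋ + 1`; deleting a vertex `v ∈ K` destroys at least the
`C(⌊q/a⌋, r - 1)` edges of `K` through `v`. Hence `Y` contains at least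
`∑_{i < aℓ} C(⌊i/a⌋, r - 1) = a ∑_{j < ℓ} C(j, r - 1) = a C(ℓ, r)` edges.
-/

theorem Finset.sum_range_choose_eq_choose_succ (n k : ℕ) :
    ∑ i ∈ range n, i.choose k = n.choose (k + 1) := by
  induction n with
  | zero => simp
  | succ n ih => rw [sum_range_succ, ih, Nat.choose_succ_succ', add_comm]

theorem Finset.sum_range_mul_div {M : Type*} [AddCommMonoid M] (f : ℕ → M) (a n : ℕ) :
    ∑ i ∈ range (a * n), f (i / a) = a • ∑ j ∈ range n, f j := by
  induction n with
  | zero => simp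
  | succ n ih =>
    have hblock : ∀ x ∈ range a, f ((a * n + x) / a) = f n := fun x hx => by
      have hxa : x < a := mem_range.mp hx
      rw [Nat.mul_add_div (by omega), Nat.div_eq_of_lt hxa, add_zero]
    rw [mul_add_one, sum_range_add, ih, sum_congr rfl hblock, sum_const, card_range,
      sum_range_succ, smul_add]

section Hypergraph

variable {α : Type*} [DecidableEq α] {r : ℕ} {F : Finset (Finset α)}

theorem IsClique.choose_le_card_edges_mem {K Y : Finset α} {v : α} (hK : IsClique r F K)
    (hKY : K ⊆ Y) (hv : v ∈ K) (hr : 1 ≤ r) :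
    (K.card - 1).choose (r - 1) ≤ (F.filter fun e => e ⊆ Y ∧ v ∈ e).card := by
  rw [← card_erase_of_mem hv, ← card_powersetCard]
  refine card_le_card_of_injOn (insert v) (fun e he => ?_) (fun e₁ he₁ e₂ he₂ h => ?_)
  · rw [mem_coe, mem_powersetCard] at he
    have hve : v ∉ e := fun h => notMem_erase v K (he.1 h)
    have heK : insert v e ⊆ K := insert_subset hv (he.1.trans (erase_subset v K))
    rw [mem_coe, mem_filter]
    refine ⟨hK _ heK ?_, heK.trans hKY, mem_insert_self v e⟩
    rw [card_insert_of_notMem hve, he.2, Nat.sub_add_cancel hr]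
  · rw [mem_coe, mem_powersetCard] at he₁ he₂
    have h₁ : v ∉ e₁ := fun h => notMem_erase v K (he₁.1 h)
    have h₂ : v ∉ e₂ := fun h => notMem_erase v K (he₂.1 h)
    simpa only [erase_insert h₁, erase_insert h₂] using congrArg (erase · v) h

theorem card_edges_subset_erase_add_card_edges_mem (Y : Finset α) (v : α) :
    (F.filter fun e => e ⊆ Y.erase v).card + (F.filter fun e => e ⊆ Y ∧ v ∈ e).card
      = (F.filter fun e => e ⊆ Y).card := by
  rw [← card_filter_add_card_filter_not (s := F.filter fun e => e ⊆ Y) (fun e => v ∈ e),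
    filter_filter, filter_filter, add_comm]
  simp only [subset_erase]

theorem sum_choose_le_card_edges (hr : 1 ≤ r) {X : Finset α} {n : ℕ} (g : ℕ → ℕ)
    (hprop : ∀ q < n, HasProp r (q + 1) (g q + 1) X F) :
    ∀ q ≤ n, ∀ Y ⊆ X, Y.card = q →
      ∑ i ∈ range q, (g i).choose (r - 1) ≤ (F.filter fun e => e ⊆ Y).card := by
  intro q
  induction q with
  | zero => simp
  | succ q ih =>
    intro hq Y hYX hYc
    obtain ⟨K, hKY, hKc, hK⟩ := hprop q hq Y hYX hYc
    obtain ⟨v, hv⟩ : K.Nonempty := card_pos.mp (by omega)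
    have hYv : (Y.erase v).card = q := by rw [card_erase_of_mem (hKY hv), hYc, Nat.add_sub_cancel]
    calc ∑ i ∈ range (q + 1), (g i).choose (r - 1)
        = ∑ i ∈ range q, (g i).choose (r - 1) + (K.card - 1).choose (r - 1) := by
          rw [sum_range_succ, hKc, Nat.add_sub_cancel]
      _ ≤ (F.filter fun e => e ⊆ Y.erase v).card + (F.filter fun e => e ⊆ Y ∧ v ∈ e).card :=
          add_le_add (ih (by omega) _ ((erase_subset v Y).trans hYX) hYv)
            (hK.choose_le_card_edges_mem hKY hv hr)
      _ = (F.filter fun e => e ⊆ Y).card := card_edges_subset_erase_add_card_edges_mem Y v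

end Hypergraph

theorem statement5_general {α : Type*} [DecidableEq α] (r a ℓ : ℕ) (hr : 2 ≤ r) (ha : 2 ≤ a)
    (X : Finset α) (F : Finset (Finset α))
    (hprop : ∀ q : ℕ, 1 ≤ q → q ≤ a * ℓ → HasProp r q ((q + a - 1) / a) X F) :
    ∀ Y ⊆ X, Y.card = a * ℓ →
      a * Nat.choose ℓ r ≤ (F.filter (fun e => e ⊆ Y)).card := by
  intro Y hYX hYc
  have hceil : ∀ q, (q + 1 + a - 1) / a = q / a + 1 := fun q => by
    rw [show q + 1 + a - 1 = q + a by omega, Nat.add_div_right q (by omega)]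
  have hcount := sum_choose_le_card_edges (by omega) (fun i => i / a)
    (fun q hq => hceil q ▸ hprop (q + 1) (by omega) hq) (a * ℓ) le_rfl Y hYX hYc
  rwa [sum_range_mul_div (fun j => j.choose (r - 1)), sum_range_choose_eq_choose_succ,
    Nat.sub_add_cancel (by omega), smul_eq_mul] at hcount

/-- If an `r`-uniform hypergraph `F` on vertex set `X` with `|X| ≥ a·ℓ` has property
`(q, ⌈q/a⌉)` for every `1 ≤ q ≤ a·ℓ`, then every `Y ⊆ X` with `|Y| = a·ℓ` contains at
least `a · C(ℓ, r)` edges of `F`.  (Here `⌈q/a⌉ = (q + a - 1) / a` in natural division.) -/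
theorem statement5 {α : Type*} [DecidableEq α] (r a ℓ : ℕ) (hr : 2 ≤ r) (ha : 2 ≤ a)
    (hℓ : 1 ≤ ℓ) (X : Finset α) (hX : a * ℓ ≤ X.card)
    (F : Finset (Finset α)) (hF : ∀ e ∈ F, e ⊆ X ∧ e.card = r)
    (hprop : ∀ q : ℕ, 1 ≤ q → q ≤ a * ℓ → HasProp r q ((q + a - 1) / a) X F) :
    ∀ Y ⊆ X, Y.card = a * ℓ →
      a * Nat.choose ℓ r ≤ (F.filter (fun e => e ⊆ Y)).card :=
  statement5_general r a ℓ hr ha X F hprop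
end

section
/- Fix integers r ≥ 2, a ≥ 2 and ℓ ≥ 1. Suppose F is an r-uniform hypergraph on a finite vertex set X with |X| ≥ aℓ such that for every integer q with 1 ≤ q ≤ aℓ, F has property (q, ⌈q/a⌉). Then for every integer s with 1 ≤ s ≤ aℓ, writing t = ⌈s/a⌉ and b = a·t − s (so 0 ≤ b < a and s = (a−b)t + b(t−1)), every subset Y ⊆ X with |Y| = s satisfies: the number of edges of F contained in Y is at least (a−b)·C(t, r) + b·C(t−1, r). -/
/-!
Write `r = k + 1`. Adding the vertices of `Y` one at a time, the `(i+1)`-st vertex can be chosen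
inside a clique of size `⌈(i+1)/a⌉ = ⌊i/a⌋ + 1` of the current set, so it creates at least
`C(⌊i/a⌋, k)` new edges. Hence `Y` spans at least `∑_{i<s} C(⌊i/a⌋, k)` edges, and summing in
blocks of `a` with the hockey-stick identity shows this sum equals `(a-b)·C(t,r) + b·C(t-1,r)`.
-/

open Finset

theorem sum_range_choose_add_div {a m : ℕ} (hm : m ≤ a) (q k : ℕ) :
    ∑ x ∈ range m, ((a * q + x) / a).choose k = m * q.choose k := by
  rw [sum_congr rfl fun x hx => ?_, sum_const, card_range, smul_eq_mul]
  have hx : x < a := (mem_range.1 hx).trans_le hm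
  rw [add_comm, Nat.add_mul_div_left _ _ (by omega), Nat.div_eq_of_lt hx, zero_add]

theorem sum_range_mul_choose_div {a : ℕ} (q k : ℕ) :
    ∑ i ∈ range (a * q), (i / a).choose k = a * q.choose (k + 1) := by
  induction q with
  | zero => simp
  | succ q ih =>
    rw [Nat.mul_succ, sum_range_add, ih, sum_range_choose_add_div le_rfl, Nat.choose_succ_succ']
    ring

theorem sum_range_choose_div_eq {a s : ℕ} (ha : 0 < a) (hs : 0 < s) (k : ℕ) :
    ∑ i ∈ range s, (i / a).choose k =
      (a - (a * ((s + a - 1) / a) - s)) * ((s + a - 1) / a).choose (k + 1)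
        + (a * ((s + a - 1) / a) - s) * ((s + a - 1) / a - 1).choose (k + 1) := by
  obtain ⟨q, m, hm0, hma, rfl⟩ : ∃ q m, 0 < m ∧ m ≤ a ∧ s = a * q + m :=
    ⟨(s - 1) / a, (s - 1) % a + 1, by omega, Nat.mod_lt _ ha, by
      have := Nat.div_add_mod (s - 1) a; omega⟩
  have ht : (a * q + m + a - 1) / a = q + 1 := by
    rw [show a * q + m + a - 1 = m - 1 + a * (q + 1) by rw [Nat.mul_succ]; omega,
      Nat.add_mul_div_left _ _ ha, Nat.div_eq_of_lt (by omega), zero_add]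
  have hb : a * (q + 1) - (a * q + m) = a - m := by rw [Nat.mul_succ]; omega
  obtain ⟨c, rfl⟩ : ∃ c, a = m + c := ⟨a - m, by omega⟩
  rw [sum_range_add, sum_range_mul_choose_div, sum_range_choose_add_div hma, ht, hb,
    Nat.add_sub_cancel, Nat.add_sub_cancel_left, Nat.add_sub_cancel, Nat.choose_succ_succ']
  ring

section Counting

variable {α : Type*} [DecidableEq α]

theorem card_filter_subset_erase_add_choose_le {k : ℕ} {H : Finset (Finset α)}
    {C Y : Finset α} {v : α} (hC : IsClique (k + 1) H C) (hCY : C ⊆ Y) (hv : v ∈ C) :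
    #(H.filter (· ⊆ Y.erase v)) + (#C - 1).choose k ≤ #(H.filter (· ⊆ Y)) := by
  have hsplit := card_filter_add_card_filter_not (s := H.filter (· ⊆ Y)) (v ∉ ·)
  simp only [filter_filter, ← subset_erase, not_not] at hsplit
  suffices (#C - 1).choose k ≤ #(H.filter fun e => e ⊆ Y ∧ v ∈ e) by omega
  rw [← card_erase_of_mem hv, ← card_powersetCard]
  have hv_notMem {e} (he : e ∈ (C.erase v).powersetCard k) : v ∉ e :=
    fun h => notMem_erase v C ((mem_powersetCard.1 he).1 h)
  refine card_le_card_of_injOn (insert v) (fun e he => ?_) fun e he e' he' hee' => ?_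
  · obtain ⟨heC, hek⟩ := mem_powersetCard.1 he
    have hsub : insert v e ⊆ C := insert_subset hv (heC.trans (erase_subset v C))
    simp only [coe_filter, Set.mem_ofPred_eq, mem_insert_self, and_true]
    exact ⟨hC _ hsub (by rw [card_insert_of_notMem (hv_notMem he), hek]), hsub.trans hCY⟩
  · rw [← erase_insert (hv_notMem he), ← erase_insert (hv_notMem he'), hee']

theorem sum_range_choose_div_le_card_filter_subset {a k N : ℕ} (ha : 0 < a) {X : Finset α}
    {F : Finset (Finset α)}
    (hprop : ∀ q : ℕ, 1 ≤ q → q ≤ N → HasProp (k + 1) q ((q + a - 1) / a) X F) :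
    ∀ s ≤ N, ∀ Y ⊆ X, #Y = s → ∑ i ∈ range s, (i / a).choose k ≤ #(F.filter (· ⊆ Y)) := by
  intro s
  induction s with
  | zero => simp
  | succ s ih =>
    intro hsN Y hYX hYs
    obtain ⟨C, hCY, hC, hCclique⟩ := hprop (s + 1) (by omega) hsN Y hYX hYs
    rw [show s + 1 + a - 1 = s + a by omega, Nat.add_div_right s ha] at hC
    obtain ⟨v, hv⟩ : C.Nonempty := card_pos.1 (hC ▸ Nat.succ_pos _)
    have hYv : #(Y.erase v) = s := by rw [card_erase_of_mem (hCY hv)]; omega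
    have hstep := card_filter_subset_erase_add_choose_le hCclique hCY hv
    rw [hC, Nat.add_sub_cancel] at hstep
    rw [sum_range_succ]
    exact (Nat.add_le_add_right (ih (by omega) _ ((erase_subset v Y).trans hYX) hYv) _).trans
      hstep

end Counting

theorem statement6_general {α : Type*} [DecidableEq α] (r a ℓ : ℕ) (hr : 2 ≤ r)
    (X : Finset α)
    (F : Finset (Finset α))
    (hprop : ∀ q : ℕ, 1 ≤ q → q ≤ a * ℓ → HasProp r q ((q + a - 1) / a) X F) :
    ∀ s : ℕ, 1 ≤ s → s ≤ a * ℓ → ∀ Y ⊆ X, Y.card = s →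
      (a - (a * ((s + a - 1) / a) - s)) * Nat.choose ((s + a - 1) / a) r
        + (a * ((s + a - 1) / a) - s) * Nat.choose ((s + a - 1) / a - 1) r
        ≤ (F.filter (fun e => e ⊆ Y)).card := by
  intro s hs hsN Y hYX hYs
  obtain ⟨k, rfl⟩ : ∃ k, r = k + 1 := ⟨r - 1, by omega⟩
  have ha : 0 < a := Nat.pos_of_mul_pos_right (b := ℓ) (by omega)
  rw [← sum_range_choose_div_eq ha hs]
  exact sum_range_choose_div_le_card_filter_subset ha hprop s hsN Y hYX hYs

/-- If an `r`-uniform hypergraph `F` on vertex set `X` with `|X| ≥ a·ℓ` has property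
`(q, ⌈q/a⌉)` for every `1 ≤ q ≤ a·ℓ`, then for every `1 ≤ s ≤ a·ℓ`, writing
`t = ⌈s/a⌉ = (s + a - 1) / a` and `b = a·t - s`, every `Y ⊆ X` with `|Y| = s` contains at
least `(a - b)·C(t, r) + b·C(t - 1, r)` edges of `F`. -/
theorem statement6 {α : Type*} [DecidableEq α] (r a ℓ : ℕ) (hr : 2 ≤ r) (ha : 2 ≤ a)
    (hℓ : 1 ≤ ℓ) (X : Finset α) (hX : a * ℓ ≤ X.card)
    (F : Finset (Finset α)) (hF : ∀ e ∈ F, e ⊆ X ∧ e.card = r)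
    (hprop : ∀ q : ℕ, 1 ≤ q → q ≤ a * ℓ → HasProp r q ((q + a - 1) / a) X F) :
    ∀ s : ℕ, 1 ≤ s → s ≤ a * ℓ → ∀ Y ⊆ X, Y.card = s →
      (a - (a * ((s + a - 1) / a) - s)) * Nat.choose ((s + a - 1) / a) r
        + (a * ((s + a - 1) / a) - s) * Nat.choose ((s + a - 1) / a - 1) r
        ≤ (F.filter (fun e => e ⊆ Y)).card :=
  statement6_general r a ℓ hr X F hprop
end

section
/- For all integers r ≥ 2 and p ≥ r−1, t_r(2p+1, p+1) ≤ 1/2^{r−1}. -/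
open Finset Filter

/-- `T_r(n, q, p)`: minimum number of edges of an `r`-uniform hypergraph on `n` vertices
having property `(q, p)`. -/
noncomputable def TNum (r n q p : ℕ) : ℕ :=
  sInf { m | ∃ H : Finset (Finset (Fin n)),
    (∀ e ∈ H, e.card = r) ∧ HasProp r q p Finset.univ H ∧ H.card = m }

/-- `t_r(n, q, p) = T_r(n, q, p) / C(n, r)`. -/
noncomputable def tDen (r n q p : ℕ) : ℝ := (TNum r n q p : ℝ) / (n.choose r)

/-!
The sequence `t_r(n, q, p)` is nondecreasing once `n ≥ r`: deleting a vertex from an optimal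
hypergraph on `n + 1` vertices leaves one with property `(q, p)` on `n` vertices, and on
average a deletion keeps a fraction `(n + 1 - r) / (n + 1)` of the edges. Being bounded by `1`,
it converges.

For the upper bound, split `2m` vertices into two halves of size `m` and take as edges the
`r`-sets inside either half. By pigeonhole, any `2p + 1` vertices contain `p + 1` in one half,
and these form a clique. This hypergraph has `2 C(m, r)` edges, while `2^r C(m, r) ≤ C(2m, r)`,
so `t_r(2m, 2p + 1, p + 1) ≤ 2^(1 - r)` for every `m`.
-/

namespace Nat

theorem pow_mul_descFactorial_le_descFactorial_mul (k m r : ℕ) :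
    k ^ r * m.descFactorial r ≤ (k * m).descFactorial r := by
  induction r with
  | zero => simp
  | succ r ih =>
    rw [descFactorial_succ, descFactorial_succ]
    calc k ^ (r + 1) * ((m - r) * m.descFactorial r)
        = (k * (m - r)) * (k ^ r * m.descFactorial r) := by ring
      _ ≤ (k * m - r) * (k * m).descFactorial r := by
        gcongr
        rcases k.eq_zero_or_pos with rfl | hk
        · simp
        · rw [Nat.mul_sub]
          have : r ≤ k * r := Nat.le_mul_of_pos_left r hk
          omega

theorem pow_mul_choose_le_choose_mul (k m r : ℕ) : k ^ r * m.choose r ≤ (k * m).choose r := by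
  have h := pow_mul_descFactorial_le_descFactorial_mul k m r
  rw [descFactorial_eq_factorial_mul_choose, descFactorial_eq_factorial_mul_choose,
    mul_left_comm] at h
  exact Nat.le_of_mul_le_mul_left h r.factorial_pos

end Nat

section Hypergraph

variable {α : Type*} {r q p : ℕ}

theorem isClique_powersetCard_of_subset {X Y : Finset α} (hY : Y ⊆ X) :
    IsClique r (powersetCard r X) Y :=
  fun _ he hcard => mem_powersetCard.2 ⟨he.trans hY, hcard⟩

theorem hasProp_powersetCard (hpq : p ≤ q) (X : Finset α) :
    HasProp r q p X (powersetCard r X) := by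
  intro Z hZX hZ
  obtain ⟨Y, hYZ, hY⟩ := exists_subset_card_eq (hZ ▸ hpq)
  exact ⟨Y, hYZ, hY, isClique_powersetCard_of_subset (hYZ.trans hZX)⟩

theorem hasProp_powersetCard_union_compl [Fintype α] [DecidableEq α] (A : Finset α) :
    HasProp r (2 * p + 1) (p + 1) univ (powersetCard r A ∪ powersetCard r Aᶜ) := by
  intro Z _ hZ
  have hsplit := card_inter_add_card_sdiff Z A
  rcases le_or_gt (p + 1) #(Z ∩ A) with hA | hB
  · obtain ⟨Y, hYA, hY⟩ := exists_subset_card_eq hA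
    refine ⟨Y, hYA.trans inter_subset_left, hY, fun e he hcard => mem_union_left _ ?_⟩
    exact isClique_powersetCard_of_subset (hYA.trans inter_subset_right) e he hcard
  · obtain ⟨Y, hYB, hY⟩ := exists_subset_card_eq (show p + 1 ≤ #(Z \ A) by omega)
    refine ⟨Y, hYB.trans sdiff_subset, hY, fun e he hcard => mem_union_right _ ?_⟩
    refine isClique_powersetCard_of_subset (fun x hx => ?_) e he hcard
    exact mem_compl.2 (mem_sdiff.1 (hYB hx)).2

theorem hasProp_comap {β : Type*} [Fintype β] [DecidableEq α] (g : β ↪ α) {X : Finset α}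
    {H : Finset (Finset α)} (hgX : ∀ b, g b ∈ X) (hH : HasProp r q p X H) :
    HasProp r q p univ {e ∈ powersetCard r univ | e.map g ∈ H} := by
  intro Z _ hZ
  have hZX : Z.map g ⊆ X := fun _ hx => by
    obtain ⟨b, -, rfl⟩ := mem_map.1 hx
    exact hgX b
  obtain ⟨Y, hYZ, hY, hYcl⟩ := hH (Z.map g) hZX (by rw [card_map, hZ])
  obtain ⟨U, hUZ, rfl⟩ := subset_map_iff.1 hYZ
  refine ⟨U, hUZ, by rwa [card_map] at hY, fun e heU he => ?_⟩
  exact mem_filter.2 ⟨mem_powersetCard.2 ⟨subset_univ e, he⟩,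
    hYcl _ (map_subset_map.2 heU) (by rw [card_map, he])⟩

end Hypergraph

section TNum

variable {r q p n : ℕ}

theorem TNum_le_card (H : Finset (Finset (Fin n))) (hH : ∀ e ∈ H, #e = r)
    (hprop : HasProp r q p univ H) : TNum r n q p ≤ #H :=
  Nat.sInf_le ⟨H, hH, hprop, rfl⟩

theorem exists_card_eq_TNum (hpq : p ≤ q) :
    ∃ H : Finset (Finset (Fin n)),
      (∀ e ∈ H, #e = r) ∧ HasProp r q p univ H ∧ #H = TNum r n q p :=
  Nat.sInf_mem (s := {m | ∃ H : Finset (Finset (Fin n)),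
      (∀ e ∈ H, #e = r) ∧ HasProp r q p univ H ∧ #H = m})
    ⟨_, powersetCard r univ, fun _ he => (mem_powersetCard.1 he).2,
      hasProp_powersetCard hpq univ, rfl⟩

theorem TNum_le_choose (hpq : p ≤ q) : TNum r n q p ≤ n.choose r := by
  simpa using TNum_le_card (powersetCard r univ) (fun _ he => (mem_powersetCard.1 he).2)
    (hasProp_powersetCard hpq univ)

theorem tDen_le_one (hpq : p ≤ q) : tDen r n q p ≤ 1 :=
  div_le_one_of_le₀ (by exact_mod_cast TNum_le_choose hpq) (Nat.cast_nonneg _)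

theorem TNum_le_card_of_hasProp {α : Type*} [DecidableEq α] (X : Finset α) (hX : #X = n)
    (H : Finset (Finset α)) (hprop : HasProp r q p X H) : TNum r n q p ≤ #H := by
  let g : Fin n ↪ α := (X.equivFinOfCardEq hX).symm.toEmbedding.trans (.subtype _)
  refine (TNum_le_card _ (fun e he => (mem_powersetCard.1 (mem_filter.1 he).1).2)
    (hasProp_comap g (fun b => Subtype.prop _) hprop)).trans ?_
  exact card_le_card_of_injOn (·.map g) (fun e he => (mem_filter.1 he).2)
    (fun _ _ _ _ h => map_injective g h)

theorem succ_mul_TNum_le (hpq : p ≤ q) :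
    (n + 1) * TNum r n q p ≤ (n + 1 - r) * TNum r (n + 1) q p := by
  obtain ⟨H, hH, hprop, hcard⟩ := exists_card_eq_TNum (r := r) (n := n + 1) hpq
  have hdelete (v : Fin (n + 1)) : TNum r n q p ≤ #(bipartiteAbove (· ∉ ·) H v) := by
    refine TNum_le_card_of_hasProp (univ.erase v) (by simp) _ fun Z hZ hZq => ?_
    obtain ⟨Y, hYZ, hY, hYcl⟩ := hprop Z (subset_univ Z) hZq
    refine ⟨Y, hYZ, hY, fun e he hcard => mem_filter.2 ⟨hYcl e he hcard, fun hv => ?_⟩⟩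
    exact (mem_erase.1 (hZ (hYZ (he hv)))).1 rfl
  have hcount : ∑ v : Fin (n + 1), #(bipartiteAbove (· ∉ ·) H v) = (n + 1 - r) * #H := by
    rw [sum_card_bipartiteAbove_eq_sum_card_bipartiteBelow, mul_comm, ← smul_eq_mul,
      ← sum_const]
    refine sum_congr rfl fun e he => ?_
    have hbelow : bipartiteBelow (· ∉ ·) univ e = eᶜ := by ext; simp
    rw [hbelow, card_compl, Fintype.card_fin, hH e he]
  calc (n + 1) * TNum r n q p = ∑ _v : Fin (n + 1), TNum r n q p := by simp
    _ ≤ ∑ v : Fin (n + 1), #(bipartiteAbove (· ∉ ·) H v) := sum_le_sum fun v _ => hdelete v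
    _ = (n + 1 - r) * TNum r (n + 1) q p := by rw [hcount, hcard]

theorem tDen_le_tDen_succ (hpq : p ≤ q) (hrn : r ≤ n) :
    tDen r n q p ≤ tDen r (n + 1) q p := by
  have hc : 0 < n.choose r := Nat.choose_pos hrn
  have hc' : 0 < (n + 1).choose r := Nat.choose_pos (hrn.trans n.le_succ)
  rw [tDen, tDen, div_le_div_iff₀ (by exact_mod_cast hc) (by exact_mod_cast hc')]
  norm_cast
  refine Nat.le_of_mul_le_mul_left ?_ n.succ_pos
  calc (n + 1) * (TNum r n q p * (n + 1).choose r)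
      = (n + 1) * TNum r n q p * (n + 1).choose r := by ring
    _ ≤ (n + 1 - r) * TNum r (n + 1) q p * (n + 1).choose r :=
      Nat.mul_le_mul_right _ (succ_mul_TNum_le hpq)
    _ = TNum r (n + 1) q p * ((n + 1).choose r * (n + 1 - r)) := by ring
    _ = (n + 1) * (TNum r (n + 1) q p * n.choose r) := by
      rw [← Nat.choose_mul_succ_eq]
      ring

theorem exists_tendsto_tDen (hpq : p ≤ q) :
    ∃ L, Tendsto (fun n => tDen r n q p) atTop (nhds L) := by
  have hmono : Monotone fun k => tDen r (k + r) q p :=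
    monotone_nat_of_le_succ fun k => by
      simpa only [Nat.add_right_comm k 1 r] using tDen_le_tDen_succ hpq (Nat.le_add_left r k)
  have hbdd : BddAbove (Set.range fun k => tDen r (k + r) q p) :=
    ⟨1, by rintro _ ⟨k, rfl⟩; exact tDen_le_one hpq⟩
  exact ⟨_, (tendsto_add_atTop_iff_nat r).1 (tendsto_atTop_ciSup hmono hbdd)⟩

theorem TNum_two_mul_le (m : ℕ) :
    TNum r (2 * m) (2 * p + 1) (p + 1) ≤ 2 * m.choose r := by
  obtain ⟨A, -, hA⟩ :=
    exists_subset_card_eq (show m ≤ #(univ : Finset (Fin (2 * m))) by simp; omega)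
  have hAc : #Aᶜ = m := by rw [card_compl, hA, Fintype.card_fin]; omega
  refine (TNum_le_card _ (fun e he => ?_) (hasProp_powersetCard_union_compl A)).trans ?_
  · rcases mem_union.1 he with h | h <;> exact (mem_powersetCard.1 h).2
  · refine (card_union_le _ _).trans ?_
    rw [card_powersetCard, card_powersetCard, hA, hAc, two_mul]

theorem tDen_two_mul_le (hr : 1 ≤ r) (m : ℕ) :
    tDen r (2 * m) (2 * p + 1) (p + 1) ≤ 1 / 2 ^ (r - 1) := by
  rcases ((2 * m).choose r).eq_zero_or_pos with h0 | hpos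
  · simp [tDen, h0]
  rw [tDen, div_le_div_iff₀ (by exact_mod_cast hpos) (by positivity), one_mul]
  norm_cast
  calc TNum r (2 * m) (2 * p + 1) (p + 1) * 2 ^ (r - 1)
      ≤ 2 * m.choose r * 2 ^ (r - 1) := by gcongr; exact TNum_two_mul_le m
    _ = 2 ^ r * m.choose r := by
      rw [← Nat.sub_add_cancel hr, pow_succ, Nat.add_sub_cancel]
      ring
    _ ≤ (2 * m).choose r := Nat.pow_mul_choose_le_choose_mul 2 m r

end TNum

theorem statement8_general (r p : ℕ) (hr : 2 ≤ r) :
    ∃ L : ℝ, Tendsto (fun n => tDen r n (2 * p + 1) (p + 1)) atTop (nhds L) ∧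
      L ≤ 1 / 2 ^ (r - 1) := by
  obtain ⟨L, hL⟩ := exists_tendsto_tDen (r := r) (show p + 1 ≤ 2 * p + 1 by omega)
  have hL_even : Tendsto (fun m => tDen r (2 * m) (2 * p + 1) (p + 1)) atTop (nhds L) :=
    hL.comp (tendsto_id.const_mul_atTop' two_pos)
  exact ⟨L, hL, le_of_tendsto' hL_even (tDen_two_mul_le (by omega))⟩

/-- For all integers `r ≥ 2` and `p ≥ r - 1`, `t_r(2p + 1, p + 1) ≤ 1 / 2 ^ (r - 1)`
(the limit in `n` of `t_r(n, 2p + 1, p + 1)` exists and is at most `1 / 2 ^ (r - 1)`). -/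
theorem statement8 (r p : ℕ) (hr : 2 ≤ r) (hp : r - 1 ≤ p) :
    ∃ L : ℝ, Tendsto (fun n => tDen r n (2 * p + 1) (p + 1)) atTop (nhds L) ∧
      L ≤ 1 / 2 ^ (r - 1) :=
  statement8_general r p hr
end

section
/- If H is a 3-uniform hypergraph on n ≥ 4 vertices with more than (3/4)·C(n,3) edges, then H contains four vertices all four of whose triples are edges of H (i.e., H contains a clique K_4^3 on 4 vertices). -/
/-!
Call a triple a *hole* if it is not an edge. If `H` has no `K₄³`, every `4`-set contains a hole,
while a hole lies in only `n - 3` of the `4`-sets. Double counting gives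
`C(n, 4) ≤ (n - 3) · #holes`, i.e. `#holes ≥ C(n, 3) / 4`, so `#H ≤ (3/4) · C(n, 3)`.
-/

open Finset

variable {α : Type*} [Fintype α] [DecidableEq α]

theorem card_filter_superset_powersetCard_succ_le (s : Finset α) :
    #{t ∈ powersetCard (#s + 1) univ | s ⊆ t} ≤ Fintype.card α - #s :=
  calc #{t ∈ powersetCard (#s + 1) univ | s ⊆ t}
      ≤ #((univ \ s).image (insert · s)) := by
        refine card_le_card fun t ht ↦ ?_
        rw [mem_filter, mem_powersetCard] at ht
        obtain ⟨a, has, rfl⟩ := exists_eq_insert_iff.2 ⟨ht.2, ht.1.2.symm⟩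
        exact mem_image_of_mem _ (mem_sdiff.2 ⟨mem_univ a, has⟩)
    _ ≤ #(univ \ s) := card_image_le
    _ = Fintype.card α - #s := card_univ_sdiff s

theorem choose_succ_le_card_mul_of_forall_exists_subset {r : ℕ} {M : Finset (Finset α)}
    (hM : ∀ e ∈ M, #e = r) (hcover : ∀ Y : Finset α, #Y = r + 1 → ∃ e ∈ M, e ⊆ Y) :
    (Fintype.card α).choose (r + 1) ≤ #M * (Fintype.card α - r) := by
  rw [← card_univ, ← card_powersetCard, ← mul_one #(powersetCard _ _)]
  refine card_mul_le_card_mul (fun Y e ↦ e ⊆ Y) (fun Y hY ↦ ?_) (fun e he ↦ ?_)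
  · obtain ⟨e, he, heY⟩ := hcover Y (mem_powersetCard.1 hY).2
    exact card_pos.2 ⟨e, (mem_bipartiteAbove _).2 ⟨he, heY⟩⟩
  · simpa [bipartiteBelow, hM e he] using card_filter_superset_powersetCard_succ_le e

theorem choose_le_succ_mul_card_of_forall_exists_subset {r : ℕ} (hr : r < Fintype.card α)
    {M : Finset (Finset α)} (hM : ∀ e ∈ M, #e = r)
    (hcover : ∀ Y : Finset α, #Y = r + 1 → ∃ e ∈ M, e ⊆ Y) :
    (Fintype.card α).choose r ≤ (r + 1) * #M := by
  have hpascal := Nat.choose_succ_right_eq (Fintype.card α) r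
  have hbound := choose_succ_le_card_mul_of_forall_exists_subset hM hcover
  refine Nat.le_of_mul_le_mul_right ?_ (Nat.sub_pos_of_lt hr)
  calc (Fintype.card α).choose r * (Fintype.card α - r)
      = (Fintype.card α).choose (r + 1) * (r + 1) := hpascal.symm
    _ ≤ #M * (Fintype.card α - r) * (r + 1) := Nat.mul_le_mul_right _ hbound
    _ = (r + 1) * #M * (Fintype.card α - r) := by ring

theorem succ_mul_card_le_mul_choose_of_cliqueFree {r : ℕ} (hr : r < Fintype.card α)
    {H : Finset (Finset α)} (hH : ∀ e ∈ H, #e = r)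
    (hfree : ∀ Y : Finset α, #Y = r + 1 → ∃ e ⊆ Y, #e = r ∧ e ∉ H) :
    (r + 1) * #H ≤ r * (Fintype.card α).choose r := by
  set holes := powersetCard r univ \ H
  have hHsub : H ⊆ powersetCard r univ := fun e he ↦ mem_powersetCard.2 ⟨subset_univ e, hH e he⟩
  have hholes : #holes + #H = (Fintype.card α).choose r := by
    rw [card_sdiff_add_card_eq_card hHsub, card_powersetCard, card_univ]
  have hbound : (Fintype.card α).choose r ≤ (r + 1) * #holes := by
    refine choose_le_succ_mul_card_of_forall_exists_subset hr
      (fun e he ↦ (mem_powersetCard.1 (mem_sdiff.1 he).1).2) fun Y hY ↦ ?_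
    obtain ⟨e, heY, he, heH⟩ := hfree Y hY
    exact ⟨e, mem_sdiff.2 ⟨mem_powersetCard.2 ⟨subset_univ e, he⟩, heH⟩, heY⟩
  nlinarith

/-- If a 3-uniform hypergraph on `n ≥ 4` vertices has more than `(3/4)·C(n, 3)` edges,
then it contains a clique on `4` vertices (a copy of `K₄³`). -/
theorem statement19 (n : ℕ) (hn : 4 ≤ n) (H : Finset (Finset (Fin n)))
    (hH : ∀ e ∈ H, e.card = 3)
    (hcard : (3 / 4 : ℝ) * (n.choose 3) < H.card) :
    ∃ Y : Finset (Fin n), Y.card = 4 ∧ ∀ e ⊆ Y, e.card = 3 → e ∈ H := by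
  by_contra! hfree
  have hbound := succ_mul_card_le_mul_choose_of_cliqueFree (r := 3)
    (by rw [Fintype.card_fin]; omega) hH hfree
  rw [Fintype.card_fin] at hbound
  have : (4 : ℝ) * H.card ≤ 3 * n.choose 3 := by exact_mod_cast hbound
  linarith
end
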